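/- For the Gray digit space (I, GF), two sequences α, β ∈ GF^ω satisfy ⟦α⟧_G = ⟦β⟧_G if and only if either α = β, or there is an index i ≥ 0 such that α_j = β_j for all j < i, {α_i, β_i} = {g_{-1}, g_1}, α_{i+1} = β_{i+1} = g_1, and α_j = β_j = g_{-1} for all j > i+1. -/

import Mathlib

/-- `seqComp α n` is the composition `α 0 ∘ α 1 ∘ ⋯ ∘ α (n-1)`. -/
def seqComp {X : Type*} (α : ℕ → X → X) : ℕ → X → X
  | 0 => id
  | n + 1 => seqComp α n ∘ α n

/-- The Gray digit `gᵢ(x) = -i·(x-1)/2`. -/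
noncomputable def gmap (i : ℝ) (x : ℝ) : ℝ := -i * (x - 1) / 2

/-!
A point coded by a Gray sequence `γ` is `γ 0 z` with `z ∈ [-1,1]` coded by the tail of `γ`, and
the digits are injective, so two codings of one point that first differ at `i` code one point `z`
from `i` on. There `g₋₁ a = g₁ b` forces `a = b = 1`, so `z = 0` and both tails after `i` code `1`.
Since `g₋₁ ≤ 0 ≤ g₁` on `[-1,1]`, the point `1` is only `g₁ (-1)` and `-1` is only coded by the
constant sequence `g₋₁`. Conversely, the digits are `1/2`-Lipschitz, so a sequence codes at most
one point.
-/

open Set Function Filter Topology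
open scoped NNReal

section SeqComp

variable {X : Type*}

theorem seqComp_add (α : ℕ → X → X) (m n : ℕ) :
    seqComp α (m + n) = seqComp α m ∘ seqComp (fun k => α (m + k)) n := by
  induction n with
  | zero => rfl
  | succ n ih => rw [← add_assoc, seqComp, ih]; rfl

theorem seqComp_congr {α β : ℕ → X → X} {n : ℕ} (h : ∀ k < n, α k = β k) :
    seqComp α n = seqComp β n := by
  induction n with
  | zero => rfl
  | succ n ih =>
    rw [seqComp, seqComp, ih fun k hk => h k (Nat.lt_succ_of_lt hk), h n n.lt_succ_self]

theorem seqComp_injective {α : ℕ → X → X} (h : ∀ k, Injective (α k)) (n : ℕ) :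
    Injective (seqComp α n) := by
  induction n with
  | zero => exact injective_id
  | succ n ih => exact ih.comp (h n)

theorem seqComp_mapsTo {α : ℕ → X → X} {s : Set X} (h : ∀ k, MapsTo (α k) s s) (n : ℕ) :
    MapsTo (seqComp α n) s s := by
  induction n with
  | zero => exact mapsTo_id s
  | succ n ih => exact ih.comp (h n)

theorem seqComp_image_add_subset {α : ℕ → X → X} {s : Set X} (h : ∀ k, MapsTo (α k) s s)
    (m n : ℕ) : seqComp α (m + n) '' s ⊆ seqComp α m '' s := by
  rw [seqComp_add, image_comp]
  exact image_mono (seqComp_mapsTo (fun k => h (m + k)) n).image_subset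

theorem seqComp_apply_of_isFixedPt {α : ℕ → X → X} {x : X} (h : ∀ k, IsFixedPt (α k) x)
    (n : ℕ) : seqComp α n x = x := by
  induction n with
  | zero => rfl
  | succ n ih => exact (congrArg (seqComp α n) (h n)).trans ih

theorem LipschitzWith.seqComp [PseudoEMetricSpace X] {α : ℕ → X → X} {K : ℝ≥0}
    (h : ∀ k, LipschitzWith K (α k)) (n : ℕ) : LipschitzWith (K ^ n) (_root_.seqComp α n) := by
  induction n with
  | zero => simpa [_root_.seqComp] using LipschitzWith.id
  | succ n ih => simpa [_root_.seqComp, pow_succ] using ih.comp (h n)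

end SeqComp

/-- `Codes s α x` is `⟦α⟧ = x`, i.e. `x ∈ ⋂ n, α^{<n}[s]`. -/
def Codes {X : Type*} (s : Set X) (α : ℕ → X → X) (x : X) : Prop :=
  ∀ n, x ∈ seqComp α n '' s

namespace Codes

variable {X : Type*} {s : Set X} {α : ℕ → X → X} {x : X}

theorem mem (hx : Codes s α x) : x ∈ s := by
  simpa [seqComp] using hx 0

theorem of_isFixedPt (hx : x ∈ s) (h : ∀ k, IsFixedPt (α k) x) : Codes s α x :=
  fun n => ⟨x, hx, seqComp_apply_of_isFixedPt h n⟩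

theorem iff_exists_seqComp (hs : ∀ k, MapsTo (α k) s s) (hinj : ∀ k, Injective (α k)) (m : ℕ) :
    Codes s α x ↔ ∃ z, seqComp α m z = x ∧ Codes s (fun k => α (m + k)) z := by
  constructor
  · intro hx
    obtain ⟨z, -, rfl⟩ := hx m
    refine ⟨z, rfl, fun n => ?_⟩
    obtain ⟨w, hw, hwz⟩ := hx (m + n)
    rw [seqComp_add] at hwz
    exact ⟨w, hw, seqComp_injective hinj m hwz⟩
  · rintro ⟨z, rfl, hz⟩ n
    have hmn : seqComp α m z ∈ seqComp α (m + n) '' s := by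
      rw [seqComp_add, image_comp]
      exact mem_image_of_mem _ (hz n)
    exact seqComp_image_add_subset hs n m (add_comm m n ▸ hmn)

theorem unique [MetricSpace X] (hs : Bornology.IsBounded s) {K : ℝ≥0} (hK : K < 1)
    (hα : ∀ k, LipschitzWith K (α k)) {y : X} (hx : Codes s α x) (hy : Codes s α y) : x = y := by
  have hle : ∀ n, dist x y ≤ K ^ n * Metric.diam s := by
    intro n
    obtain ⟨a, ha, rfl⟩ := hx n
    obtain ⟨b, hb, rfl⟩ := hy n
    calc dist (seqComp α n a) (seqComp α n b) ≤ (K : ℝ) ^ n * dist a b := by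
          simpa using (LipschitzWith.seqComp hα n).dist_le_mul a b
      _ ≤ K ^ n * Metric.diam s := by gcongr; exact Metric.dist_le_diam_of_mem hs ha hb
  have hlim : Tendsto (fun n => (K : ℝ) ^ n * Metric.diam s) atTop (𝓝 0) := by
    simpa using (tendsto_pow_atTop_nhds_zero_of_lt_one K.coe_nonneg hK).mul_const (Metric.diam s)
  exact dist_le_zero.1 (ge_of_tendsto' hlim hle)

end Codes

theorem forall_gt_iff_forall_add {p : ℕ → Prop} (m : ℕ) :
    (∀ n > m, p n) ↔ ∀ k, p (m + 1 + k) :=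
  ⟨fun h k => h _ (by omega),
    fun h n hn => by simpa [show m + 1 + (n - (m + 1)) = n by omega] using h (n - (m + 1))⟩

section Gray

theorem gmap_mapsTo {d : ℝ} (hd : |d| ≤ 1) : MapsTo (gmap d) (Icc (-1) 1) (Icc (-1) 1) := by
  rintro x ⟨hx₁, hx₂⟩
  obtain ⟨hd₁, hd₂⟩ := abs_le.1 hd
  constructor <;> simp only [gmap] <;> nlinarith

theorem gmap_injective {d : ℝ} (hd : d ≠ 0) : Injective (gmap d) := by
  intro a b h
  simp only [gmap] at h
  have : -d * (a - b) = 0 := by linarith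
  simpa [hd, sub_eq_zero] using this

theorem gmap_lipschitzWith {d : ℝ} (hd : |d| ≤ 1) : LipschitzWith (1 / 2) (gmap d) := by
  refine LipschitzWith.of_dist_le_mul fun a b => ?_
  have h : gmap d a - gmap d b = -d / 2 * (a - b) := by simp only [gmap]; ring
  rw [Real.dist_eq, Real.dist_eq, h, abs_mul, abs_div, abs_neg, abs_two]
  push_cast
  gcongr

theorem gmap_eq_zero_iff {d x : ℝ} (hd : d ≠ 0) : gmap d x = 0 ↔ x = 1 := by
  simp [gmap, hd, sub_eq_zero]

def GrayDigits (γ : ℕ → ℝ → ℝ) : Prop :=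
  ∀ n, γ n = gmap (-1) ∨ γ n = gmap 1

namespace GrayDigits

variable {γ δ : ℕ → ℝ → ℝ} {x : ℝ}

theorem shift (hγ : GrayDigits γ) (m : ℕ) : GrayDigits fun k => γ (m + k) :=
  fun k => hγ (m + k)

theorem mapsTo (hγ : GrayDigits γ) (k : ℕ) : MapsTo (γ k) (Icc (-1) 1) (Icc (-1) 1) := by
  rcases hγ k with h | h <;> rw [h] <;> exact gmap_mapsTo (by norm_num)

theorem injective (hγ : GrayDigits γ) (k : ℕ) : Injective (γ k) := by
  rcases hγ k with h | h <;> rw [h] <;> exact gmap_injective (by norm_num)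

theorem lipschitzWith (hγ : GrayDigits γ) (k : ℕ) : LipschitzWith (1 / 2) (γ k) := by
  rcases hγ k with h | h <;> rw [h] <;> exact gmap_lipschitzWith (by norm_num)

theorem codes_unique (hγ : GrayDigits γ) {y : ℝ} (hx : Codes (Icc (-1) 1) γ x)
    (hy : Codes (Icc (-1) 1) γ y) : x = y :=
  Codes.unique (Metric.isBounded_Icc _ _) (by norm_num) hγ.lipschitzWith hx hy

theorem codes_iff_exists_seqComp (hγ : GrayDigits γ) (m : ℕ) :
    Codes (Icc (-1) 1) γ x ↔
      ∃ z, seqComp γ m z = x ∧ Codes (Icc (-1) 1) (fun k => γ (m + k)) z :=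
  Codes.iff_exists_seqComp hγ.mapsTo hγ.injective m

theorem codes_iff_head (hγ : GrayDigits γ) :
    Codes (Icc (-1) 1) γ x ↔
      ∃ z ∈ Icc (-1) 1, γ 0 z = x ∧ Codes (Icc (-1) 1) (fun k => γ (1 + k)) z := by
  rw [hγ.codes_iff_exists_seqComp 1]
  exact ⟨fun ⟨z, hz, hc⟩ => ⟨z, hc.mem, hz, hc⟩, fun ⟨z, _, hz, hc⟩ => ⟨z, hz, hc⟩⟩

theorem codes_neg_one_iff (hγ : GrayDigits γ) :
    Codes (Icc (-1) 1) γ (-1) ↔ ∀ n, γ n = gmap (-1) := by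
  have head : ∀ {γ}, GrayDigits γ → Codes (Icc (-1) 1) γ (-1) →
      γ 0 = gmap (-1) ∧ Codes (Icc (-1) 1) (fun k => γ (1 + k)) (-1) := by
    intro γ hγ hc
    obtain ⟨z, ⟨-, hz⟩, hγz, hcz⟩ := hγ.codes_iff_head.1 hc
    have h0 : γ 0 = gmap (-1) := (hγ 0).resolve_right fun h => by
      rw [h, gmap] at hγz
      linarith
    have hz' : z = -1 := by
      rw [h0, gmap] at hγz
      linarith
    exact ⟨h0, hz' ▸ hcz⟩
  refine ⟨fun hc n => ?_, fun h => Codes.of_isFixedPt (by norm_num) fun k => ?_⟩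
  · induction n generalizing γ with
    | zero => exact (head hγ hc).1
    | succ n ih => simpa [add_comm] using ih (hγ.shift 1) (head hγ hc).2
  · rw [h k, IsFixedPt, gmap]
    norm_num

theorem codes_one_iff (hγ : GrayDigits γ) :
    Codes (Icc (-1) 1) γ 1 ↔ γ 0 = gmap 1 ∧ ∀ n > 0, γ n = gmap (-1) := by
  rw [hγ.codes_iff_head, forall_gt_iff_forall_add, ← (hγ.shift 1).codes_neg_one_iff]
  constructor
  · rintro ⟨z, ⟨-, hz⟩, hγz, hcz⟩
    have h0 : γ 0 = gmap 1 := (hγ 0).resolve_left fun h => by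
      rw [h, gmap] at hγz
      linarith
    have hz' : z = -1 := by
      rw [h0, gmap] at hγz
      linarith
    exact ⟨h0, hz' ▸ hcz⟩
  · rintro ⟨h0, hc⟩
    exact ⟨-1, by norm_num, by rw [h0, gmap]; norm_num, hc⟩

theorem codes_zero_iff (hγ : GrayDigits γ) :
    Codes (Icc (-1) 1) γ 0 ↔ γ 1 = gmap 1 ∧ ∀ n > 1, γ n = gmap (-1) := by
  have hzero : ∀ z, γ 0 z = 0 ↔ z = 1 := by
    rcases hγ 0 with h | h <;> rw [h] <;> exact fun z => gmap_eq_zero_iff (by norm_num)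
  have hshift : Codes (Icc (-1) 1) γ 0 ↔ Codes (Icc (-1) 1) (fun k => γ (1 + k)) 1 := by
    rw [hγ.codes_iff_head]
    exact ⟨fun ⟨z, _, hz, hc⟩ => (hzero z).1 hz ▸ hc,
      fun hc => ⟨1, by norm_num, (hzero 1).2 rfl, hc⟩⟩
  rw [hshift, (hγ.shift 1).codes_one_iff, forall_gt_iff_forall_add, forall_gt_iff_forall_add]
  simp only [add_zero, add_assoc]
  norm_num

theorem eq_zero_of_codes_of_head_ne (hγ : GrayDigits γ) (hδ : GrayDigits δ)
    (hx : Codes (Icc (-1) 1) γ x) (hx' : Codes (Icc (-1) 1) δ x) (hne : γ 0 ≠ δ 0) : x = 0 := by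
  obtain ⟨a, ⟨-, ha⟩, rfl, -⟩ := hγ.codes_iff_head.1 hx
  obtain ⟨b, ⟨-, hb⟩, hab, -⟩ := hδ.codes_iff_head.1 hx'
  rcases hγ 0 with h | h <;> rcases hδ 0 with h' | h' <;>
    simp only [h, h', gmap, ne_eq, not_true_eq_false] at hab hne ⊢ <;>
    linarith

theorem codes_seqComp_zero_iff (hγ : GrayDigits γ) (i : ℕ) :
    Codes (Icc (-1) 1) γ (seqComp γ i 0) ↔
      γ (i + 1) = gmap 1 ∧ ∀ j > i + 1, γ j = gmap (-1) := by
  rw [hγ.codes_iff_exists_seqComp i]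
  have hz : ∀ z, seqComp γ i z = seqComp γ i 0 ↔ z = 0 :=
    fun z => (seqComp_injective hγ.injective i).eq_iff
  simp only [hz, exists_eq_left, (hγ.shift i).codes_zero_iff]
  refine and_congr_right fun _ => ⟨fun h j hj => ?_, fun h n hn => h (i + n) (by omega)⟩
  simpa [show i + (j - i) = j by omega] using h (j - i) (by omega)

theorem eq_seqComp_zero_of_codes (hγ : GrayDigits γ) (hδ : GrayDigits δ)
    (hx : Codes (Icc (-1) 1) γ x) (hx' : Codes (Icc (-1) 1) δ x) {i : ℕ}
    (hlt : ∀ j < i, γ j = δ j) (hi : γ i ≠ δ i) : x = seqComp γ i 0 := by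
  obtain ⟨z, rfl, hγz⟩ := (hγ.codes_iff_exists_seqComp i).1 hx
  obtain ⟨w, hw, hδw⟩ := (hδ.codes_iff_exists_seqComp i).1 hx'
  obtain rfl : w = z := seqComp_injective hδ.injective i (by rwa [seqComp_congr hlt] at hw)
  rw [eq_zero_of_codes_of_head_ne (hγ.shift i) (hδ.shift i) hγz hδw (by simpa using hi)]

theorem eq_or_eq_of_ne (hγ : GrayDigits γ) (hδ : GrayDigits δ) {n : ℕ} (hne : γ n ≠ δ n) :
    (γ n = gmap (-1) ∧ δ n = gmap 1) ∨ (γ n = gmap 1 ∧ δ n = gmap (-1)) := by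
  rcases hγ n with h | h <;> rcases hδ n with h' | h'
  all_goals first
    | exact absurd (h.trans h'.symm) hne
    | exact .inl ⟨h, h'⟩
    | exact .inr ⟨h, h'⟩

end GrayDigits

end Gray

/-- In the Gray digit space `(I, GF)` with `I = [-1,1]` and `GF = {g₋₁, g₁}`:
two digit sequences `α, β` have the same value under the coding map (i.e. the points `x`
and `y` they code coincide) if and only if either `α = β`, or there is an index `i` such
that `α` and `β` agree below `i`, `{α i, β i} = {g₋₁, g₁}`,
`α (i+1) = β (i+1) = g₁`, and `α j = β j = g₋₁` for all `j > i+1`. -/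
theorem stmt7 (α β : ℕ → ℝ → ℝ)
    (hα : ∀ n, α n = gmap (-1) ∨ α n = gmap 1)
    (hβ : ∀ n, β n = gmap (-1) ∨ β n = gmap 1)
    (x y : ℝ)
    (hx : ∀ n : ℕ, x ∈ seqComp α n '' Set.Icc (-1) 1)
    (hy : ∀ n : ℕ, y ∈ seqComp β n '' Set.Icc (-1) 1) :
    x = y ↔ (α = β ∨ ∃ i : ℕ,
      (∀ j < i, α j = β j) ∧
      ((α i = gmap (-1) ∧ β i = gmap 1) ∨ (α i = gmap 1 ∧ β i = gmap (-1))) ∧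
      (α (i+1) = gmap 1 ∧ β (i+1) = gmap 1) ∧
      (∀ j > i + 1, α j = gmap (-1) ∧ β j = gmap (-1))) := by
  replace hα : GrayDigits α := hα
  replace hβ : GrayDigits β := hβ
  constructor
  · rintro rfl
    refine or_iff_not_imp_left.2 fun hne => ?_
    classical
    have hex : ∃ n, α n ≠ β n := Function.ne_iff.1 hne
    set i := Nat.find hex
    have hlt : ∀ j < i, α j = β j := fun j hj => not_not.1 (Nat.find_min hex hj)
    have hi : α i ≠ β i := Nat.find_spec hex
    obtain rfl := hα.eq_seqComp_zero_of_codes hβ hx hy hlt hi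
    obtain ⟨hα1, hαt⟩ := (hα.codes_seqComp_zero_iff i).1 hx
    obtain ⟨hβ1, hβt⟩ := (hβ.codes_seqComp_zero_iff i).1 (seqComp_congr hlt ▸ hy)
    exact ⟨i, hlt, hα.eq_or_eq_of_ne hβ hi, ⟨hα1, hβ1⟩, fun j hj => ⟨hαt j hj, hβt j hj⟩⟩
  · rintro (rfl | ⟨i, hlt, -, hi1, htail⟩)
    · exact hα.codes_unique hx hy
    calc x = seqComp α i 0 :=
          hα.codes_unique hx ((hα.codes_seqComp_zero_iff i).2 ⟨hi1.1, fun j hj => (htail j hj).1⟩)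
      _ = seqComp β i 0 := by rw [seqComp_congr hlt]
      _ = y :=
          hβ.codes_unique ((hβ.codes_seqComp_zero_iff i).2 ⟨hi1.2, fun j hj => (htail j hj).2⟩) hy
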